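/- arXiv:1510.02295 — 3 statements merged into one kernel-verified Lean document; each statement's English description precedes it below -/
import Mathlib

section
/- Let Γ ⊆ Λ⁺ × ℕ^N be a finitely generated submonoid such that e₁(λ) > 0 whenever (λ, m) ∈ Γ and m ≠ 0 (i.e., Γ has no exceptional characters). Then for every finite subset M ⊆ Γ there exists a ℤ-linear map e: ℤ^D × ℤ^N → ℤ such that: e(λ, m) ≥ 0 for all (λ, m) ∈ Γ; e(λ, m) > 0 for all (λ, m) ∈ Γ with e₁(λ) > 0; and e(λ, m) > e(μ, m') whenever (λ, m), (μ, m') ∈ M satisfy (λ, m) >_alg (μ, m'). -/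
/-
Weighting the coordinates of `ℕ^N` by powers of a base exceeding all coordinates occurring in `M`
turns `>_lex` on `M` into the order of a linear form `L`; then `F = C • Ψ + L` with `C` large
realizes the `Ψ`-weighted lexicographic order on `M`. Take `e = (K + 1) • e₁ - F`. As there are no
exceptional characters, `e₁ ≥ 1` on every generator of `Γ` with nonzero `ℕ^N`-part, so for large
`K` we get `F ≤ K • e₁` on the generators, hence on all of `Γ`, and thus `e ≥ e₁` on `Γ`. On `M`,
`≻_wt` raises `e₁` by at least `1`, which outweighs `F` once `K > F` on `M`; otherwise `λ = μ` and
`-F` decides.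
-/

open Finset

/-- Embedding of `ℕ^N` into `ℤ^N`. -/
def natToInt {N : ℕ} (m : Fin N → ℕ) : Fin N → ℤ := fun i => (m i : ℤ)

/-- `m >_lex m'` : there is an index `i` with `m i > m' i` and `m j = m' j` for all `j < i`. -/
def lexGT {N : ℕ} (m m' : Fin N → ℕ) : Prop :=
  ∃ i : Fin N, m' i < m i ∧ ∀ j : Fin N, j < i → m j = m' j

/-- The `Ψ`-weighted lexicographic order: `m > m'` iff `Ψ m > Ψ m'`, or
`Ψ m = Ψ m'` and `m >_lex m'`. -/
def wlexGT {N : ℕ} (Ψ : (Fin N → ℤ) →ₗ[ℤ] ℤ) (m m' : Fin N → ℕ) : Prop :=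
  Ψ (natToInt m') < Ψ (natToInt m) ∨
    (Ψ (natToInt m) = Ψ (natToInt m') ∧ lexGT m m')

/-- `lam ≻_wt mu` : `lam - mu` is a nonzero element of `ℕα₁ + ⋯ + ℕα_s`, where
`Δ = (α₁, …, α_s)` is the family of positive roots. -/
def succWt {D s : ℕ} (Δ : Fin s → (Fin D → ℤ)) (lam mu : Fin D → ℤ) : Prop :=
  lam ≠ mu ∧ ∃ c : Fin s → ℕ, lam - mu = ∑ t, (c t : ℤ) • Δ t

/-- The partial order `>_alg` on `Λ⁺ × ℕ^N`: `(λ, p) >_alg (μ, q)` iff `λ ≻_wt μ`, or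
`λ = μ` and `p < q` in the `Ψ`-weighted lexicographic order. -/
def algGT {D s N : ℕ} (Δ : Fin s → (Fin D → ℤ)) (Ψ : (Fin N → ℤ) →ₗ[ℤ] ℤ)
    (x y : (Fin D → ℤ) × (Fin N → ℕ)) : Prop :=
  succWt Δ x.1 y.1 ∨ (x.1 = y.1 ∧ wlexGT Ψ y.2 x.2)

open Filter

def natToIntHom (N : ℕ) : (Fin N → ℕ) →+ (Fin N → ℤ) :=
  AddMonoidHom.compLeft (Nat.castAddMonoidHom ℤ) (Fin N)

@[simp]
lemma natToIntHom_apply {N : ℕ} (m : Fin N → ℕ) : natToIntHom N m = natToInt m := rfl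

@[simp]
lemma natToInt_apply {N : ℕ} (m : Fin N → ℕ) (i : Fin N) : natToInt m i = m i := rfl

theorem lexGT.sum_mul_lt {N R : ℕ} {w : Fin N → ℤ} (hw0 : ∀ j, 0 ≤ w j)
    (hw : ∀ i, (R : ℤ) * ∑ j ∈ Ioi i, w j < w i) {m m' : Fin N → ℕ} (hm' : ∀ j, m' j ≤ R)
    (h : lexGT m m') : ∑ j, w j * m' j < ∑ j, w j * m j := by
  obtain ⟨i, hi, hprefix⟩ := h
  rw [← sub_pos, ← sum_sub_distrib, ← sum_subset (subset_univ (Ici i)), ← Ioi_insert,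
    sum_insert (by simp)]
  · have hlead : w i ≤ w i * m i - w i * m' i := by
      have : (m' i : ℤ) + 1 ≤ m i := by exact_mod_cast hi
      nlinarith [hw0 i]
    have htail : -((R : ℤ) * ∑ j ∈ Ioi i, w j) ≤ ∑ j ∈ Ioi i, (w j * m j - w j * m' j) := by
      rw [mul_sum, ← sum_neg_distrib]
      refine sum_le_sum fun j _ => ?_
      have : (m' j : ℤ) ≤ R := by exact_mod_cast hm' j
      nlinarith [hw0 j, (m j).cast_nonneg (α := ℤ)]
    linarith [hw i]
  · intro j _ hj
    rw [hprefix j (by simpa using hj), sub_self]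

theorem sum_Ioi_pow_rev_lt (R : ℕ) {N : ℕ} (i : Fin N) :
    (R : ℤ) * ∑ j ∈ Ioi i, ((R : ℤ) + 1) ^ (j.rev : ℕ) < ((R : ℤ) + 1) ^ (i.rev : ℕ) := by
  have hreindex : ∑ j ∈ Ioi i, ((R : ℤ) + 1) ^ (j.rev : ℕ) =
      ∑ k ∈ range i.rev, ((R : ℤ) + 1) ^ k := by
    rw [← Nat.Iio_eq_range, ← Fin.map_valEmbedding_Iio, ← Fin.map_revPerm_Ioi, sum_map, sum_map]
    rfl
  rw [hreindex, mul_comm]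
  have := geom_sum_mul ((R : ℤ) + 1) i.rev
  rw [add_sub_cancel_right] at this
  linarith

theorem exists_linearMap_lt_of_lexGT {N : ℕ} {T : Set (Fin N → ℕ)} (hT : T.Finite) :
    ∃ L : (Fin N → ℤ) →ₗ[ℤ] ℤ, (∀ m, 0 ≤ L (natToInt m)) ∧
      ∀ m, ∀ m' ∈ T, lexGT m m' → L (natToInt m') < L (natToInt m) := by
  obtain ⟨b, hb⟩ := hT.bddAbove
  set R := univ.sup b
  set w : Fin N → ℤ := fun j => ((R : ℤ) + 1) ^ (j.rev : ℕ)
  have hL : ∀ v : Fin N → ℤ, (∑ j, w j • LinearMap.proj (R := ℤ) j) v = ∑ j, w j * v j := by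
    simp
  have hw0 : ∀ j, 0 ≤ w j := fun j => pow_nonneg (by positivity) _
  refine ⟨∑ j, w j • LinearMap.proj (R := ℤ) j, fun m => ?_, fun m m' hm' h => ?_⟩ <;>
    simp only [hL, natToInt_apply]
  · exact sum_nonneg fun j _ => mul_nonneg (hw0 j) (by positivity)
  · exact h.sum_mul_lt hw0 (sum_Ioi_pow_rev_lt R)
      fun j => (hb hm' j).trans (le_sup (mem_univ j))

theorem exists_linearMap_lt_of_wlexGT {N : ℕ} (Ψ : (Fin N → ℤ) →ₗ[ℤ] ℤ)
    (hΨ : ∀ m, 0 ≤ Ψ (natToInt m)) {T : Set (Fin N → ℕ)} (hT : T.Finite) :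
    ∃ F : (Fin N → ℤ) →ₗ[ℤ] ℤ, (∀ m, 0 ≤ F (natToInt m)) ∧
      ∀ m, ∀ m' ∈ T, wlexGT Ψ m m' → F (natToInt m') < F (natToInt m) := by
  obtain ⟨L, hL0, hL⟩ := exists_linearMap_lt_of_lexGT hT
  obtain ⟨B, hB⟩ := (hT.image fun m => L (natToInt m)).bddAbove
  obtain ⟨C, hC0, hLC⟩ : ∃ C : ℤ, 0 < C ∧ ∀ m' ∈ T, L (natToInt m') < C :=
    ⟨max B 0 + 1, by linarith [le_max_right B 0],
      fun m' hm' => by linarith [hB ⟨m', hm', rfl⟩, le_max_left B 0]⟩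
  refine ⟨C • Ψ + L, fun m => ?_, fun m m' hm' h => ?_⟩ <;>
    simp only [LinearMap.add_apply, LinearMap.smul_apply, smul_eq_mul]
  · nlinarith [hΨ m, hL0 m]
  · rcases h with hΨlt | ⟨hΨeq, hlex⟩
    · have : Ψ (natToInt m') + 1 ≤ Ψ (natToInt m) := hΨlt
      nlinarith [hLC m' hm', hL0 m]
    · rw [hΨeq]
      linarith [hL m m' hm' hlex]

theorem succWt.apply_lt {D s : ℕ} {Δ : Fin s → (Fin D → ℤ)} {f : (Fin D → ℤ) →ₗ[ℤ] ℤ}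
    (hf : ∀ t, 0 < f (Δ t)) {lam mu : Fin D → ℤ} (h : succWt Δ lam mu) : f mu < f lam := by
  obtain ⟨hne, c, hc⟩ := h
  obtain ⟨t, ht⟩ : ∃ t, c t ≠ 0 := by
    by_contra! hc0
    exact hne (sub_eq_zero.mp (by simp [hc, hc0]))
  rw [← sub_pos, ← map_sub, hc, map_sum]
  refine sum_pos' (fun t _ => ?_) ⟨t, mem_univ t, ?_⟩ <;> rw [map_zsmul, smul_eq_mul]
  · exact mul_nonneg (by positivity) (hf t).le
  · exact mul_pos (by positivity) (hf t)

theorem AddSubmonoid.FG.eventually_le_mul {A : Type*} [AddMonoid A] {Γ : AddSubmonoid A}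
    (hΓ : Γ.FG) (u v : A →+ ℤ) (hu : ∀ x ∈ Γ, 0 ≤ u x)
    (huv : ∀ x ∈ Γ, v x ≠ 0 → 0 < u x) : ∀ᶠ K in atTop, ∀ x ∈ Γ, v x ≤ K * u x := by
  obtain ⟨S, rfl⟩ := hΓ
  have hgen : ∀ᶠ K in atTop, ∀ g ∈ S, v g ≤ K * u g := by
    rw [eventually_all_finset]
    intro g hg
    have hgΓ := AddSubmonoid.subset_closure hg
    filter_upwards [eventually_ge_atTop (v g), eventually_ge_atTop 0] with K hKv hK0
    by_cases hv : v g = 0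
    · rw [hv]
      exact mul_nonneg hK0 (hu g hgΓ)
    · nlinarith [huv g hgΓ hv]
  filter_upwards [hgen] with K hK x hx
  induction hx using AddSubmonoid.closure_induction with
  | mem g hg => exact hK g hg
  | zero => simp
  | add a b _ _ ha hb => rw [map_add, map_add, mul_add]; exact add_le_add ha hb

theorem exists_special_linear_form_general {D s N : ℕ}
    (Δ : Fin s → (Fin D → ℤ))
    (Λplus : AddSubmonoid (Fin D → ℤ))
    (e1 : (Fin D → ℤ) →ₗ[ℤ] ℤ)
    (he1Δ : ∀ t, 0 < e1 (Δ t))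
    (he1Λ : ∀ lam ∈ Λplus, 0 ≤ e1 lam)
    (Ψ : (Fin N → ℤ) →ₗ[ℤ] ℤ)
    (hΨ : ∀ m : Fin N → ℕ, 0 ≤ Ψ (natToInt m))
    (Γ : AddSubmonoid ((Fin D → ℤ) × (Fin N → ℕ)))
    (hΓΛ : ∀ x ∈ Γ, x.1 ∈ Λplus)
    (hΓfg : Γ.FG)
    (hexc : ∀ x ∈ Γ, x.2 ≠ 0 → 0 < e1 x.1)
    (M : Set ((Fin D → ℤ) × (Fin N → ℕ))) (hMfin : M.Finite) :
    ∃ e : ((Fin D → ℤ) × (Fin N → ℤ)) →ₗ[ℤ] ℤ,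
      (∀ x ∈ Γ, 0 ≤ e (x.1, natToInt x.2)) ∧
      (∀ x ∈ Γ, 0 < e1 x.1 → 0 < e (x.1, natToInt x.2)) ∧
      (∀ x ∈ M, ∀ y ∈ M, algGT Δ Ψ x y →
        e (y.1, natToInt y.2) < e (x.1, natToInt x.2)) := by
  obtain ⟨F, hF0, hF⟩ := exists_linearMap_lt_of_wlexGT Ψ hΨ (hMfin.image Prod.snd)
  have he1Γ : ∀ x ∈ Γ, 0 ≤ e1 x.1 := fun x hx => he1Λ x.1 (hΓΛ x hx)
  have hFΓ : ∀ x ∈ Γ, F (natToInt x.2) ≠ 0 → 0 < e1 x.1 := fun x hx hFx =>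
    hexc x hx fun hx0 => hFx (by rw [hx0, ← natToIntHom_apply, map_zero, map_zero])
  obtain ⟨K, hKΓ, hKM⟩ : ∃ K : ℤ,
      (∀ x ∈ Γ, F (natToInt x.2) ≤ K * e1 x.1) ∧ ∀ x ∈ M, F (natToInt x.2) < K :=
    ((hΓfg.eventually_le_mul (e1.toAddMonoidHom.comp (AddMonoidHom.fst _ _))
      ((F.toAddMonoidHom.comp (natToIntHom N)).comp (AddMonoidHom.snd _ _)) he1Γ hFΓ).and
      ((eventually_all_finite hMfin).2 fun x _ => eventually_gt_atTop (F (natToInt x.2)))).exists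
  refine ⟨(K + 1) • e1.comp (LinearMap.fst ℤ _ _) - F.comp (LinearMap.snd ℤ _ _), ?_, ?_, ?_⟩ <;>
    simp only [LinearMap.sub_apply, LinearMap.smul_apply, LinearMap.comp_apply,
      LinearMap.fst_apply, LinearMap.snd_apply, smul_eq_mul]
  · intro x hx
    nlinarith [hKΓ x hx, he1Γ x hx]
  · intro x hx _
    nlinarith [hKΓ x hx]
  · rintro x hx y - (hwt | ⟨hxy, hw⟩)
    · have := hwt.apply_lt he1Δ
      nlinarith [hKM x hx, hF0 y.2, hF0 x.2]
    · rw [hxy]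
      linarith [hF y.2 x.2 ⟨x, hx, rfl⟩ hw]

/-- Paper's Lemma on the special linear form: let `Λ = ℤ^D`, `Δ` the positive roots,
`Λ⁺ ⊆ Λ` the monoid of dominant weights, `e₁ : Λ → ℤ` linear with `e₁ > 0` on positive
roots and `e₁ ≥ 0` on `Λ⁺`.  Let `Γ ⊆ Λ⁺ × ℕ^N` be a finitely generated submonoid with no
exceptional characters (`(λ,m) ∈ Γ` with `m ≠ 0` implies `e₁ λ > 0`).  Then for every
finite `M ⊆ Γ` there is a linear form `e : ℤ^D × ℤ^N → ℤ` which is nonnegative on `Γ`,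
positive at all `(λ,m) ∈ Γ` with `e₁ λ > 0`, and strictly compatible with `>_alg` on `M`. -/
theorem exists_special_linear_form {D s N : ℕ}
    (Δ : Fin s → (Fin D → ℤ))
    (Λplus : AddSubmonoid (Fin D → ℤ))
    (e1 : (Fin D → ℤ) →ₗ[ℤ] ℤ)
    (he1Δ : ∀ t, 0 < e1 (Δ t))
    (he1Λ : ∀ lam ∈ Λplus, 0 ≤ e1 lam)
    (Ψ : (Fin N → ℤ) →ₗ[ℤ] ℤ)
    (hΨ : ∀ m : Fin N → ℕ, 0 ≤ Ψ (natToInt m))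
    (Γ : AddSubmonoid ((Fin D → ℤ) × (Fin N → ℕ)))
    (hΓΛ : ∀ x ∈ Γ, x.1 ∈ Λplus)
    (hΓfg : Γ.FG)
    (hexc : ∀ x ∈ Γ, x.2 ≠ 0 → 0 < e1 x.1)
    (M : Set ((Fin D → ℤ) × (Fin N → ℕ))) (hMΓ : M ⊆ (Γ : Set _)) (hMfin : M.Finite) :
    ∃ e : ((Fin D → ℤ) × (Fin N → ℤ)) →ₗ[ℤ] ℤ,
      (∀ x ∈ Γ, 0 ≤ e (x.1, natToInt x.2)) ∧
      (∀ x ∈ Γ, 0 < e1 x.1 → 0 < e (x.1, natToInt x.2)) ∧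
      (∀ x ∈ M, ∀ y ∈ M, algGT Δ Ψ x y →
        e (y.1, natToInt y.2) < e (x.1, natToInt x.2)) :=
  exists_special_linear_form_general Δ Λplus e1 he1Δ he1Λ Ψ hΨ Γ hΓΛ hΓfg hexc M hMfin
end

section
/- Let L be a Lie algebra over ℂ and f_1, …, f_N ∈ L satisfying the left bracket condition: for all 1 ≤ i < j ≤ N, either ⁅f_i, f_j⁆ = 0 or there exist k > i and a nonzero a ∈ ℂ with ⁅f_i, f_j⁆ = a • f_k. Let Ψ: ℤ^N → ℤ be an integral weight function such that Ψ(e_i) + Ψ(e_j) = Ψ(e_k) whenever i < j, k > i and ⁅f_i, f_j⁆ = a • f_k with a ≠ 0 (in particular Ψ = 0, giving the plain lexicographic order, is allowed). Let > be the Ψ-weighted lexicographic order on ℕ^N. Then (f_1, …, f_N) together with > is quasi-commutative: every product ι(f_{i_1}) ⋯ ι(f_{i_t}) in U(L) lies in f^{exp(i_1,…,i_t)} + span_ℂ{f^n : n ∈ ℕ^N, n < exp(i_1,…,i_t)}. -/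
open Finset

noncomputable section

variable {L : Type*} [LieRing L] [LieAlgebra ℂ L]

/-- The ordered monomial `f^m = ι(f₁)^{m₁} ⋯ ι(f_N)^{m_N}` in `U(L)`. -/
def ordMon {N : ℕ} (f : Fin N → L) (m : Fin N → ℕ) : UniversalEnvelopingAlgebra ℂ L :=
  (List.ofFn fun i => (UniversalEnvelopingAlgebra.ι ℂ (f i)) ^ (m i)).prod

/-- The product `ι(f_{i₁}) ⋯ ι(f_{i_t})` in `U(L)` associated to a word `w`. -/
def wordProd {N : ℕ} (f : Fin N → L) {t : ℕ} (w : Fin t → Fin N) :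
    UniversalEnvelopingAlgebra ℂ L :=
  (List.ofFn fun l => UniversalEnvelopingAlgebra.ι ℂ (f (w l))).prod

/-- The exponent of a word: its `k`-th coordinate is the number of occurrences of the
letter `k` in the word. -/
def expOf {N t : ℕ} (w : Fin t → Fin N) : Fin N → ℕ :=
  fun k => (Finset.univ.filter fun l => w l = k).card

/-- `(f₁, …, f_N)` together with the order `r` (where `r m n` means `m > n`) is
quasi-commutative: every product `ι(f_{i₁}) ⋯ ι(f_{i_t})` lies in
`f^{exp(i₁,…,i_t)} + span ℂ {f^n : n < exp(i₁,…,i_t)}`. -/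
def QuasiCommutative {N : ℕ} (f : Fin N → L)
    (r : (Fin N → ℕ) → (Fin N → ℕ) → Prop) : Prop :=
  ∀ (t : ℕ) (w : Fin t → Fin N),
    wordProd f w - ordMon f (expOf w) ∈
      Submodule.span ℂ {x : UniversalEnvelopingAlgebra ℂ L |
        ∃ n : Fin N → ℕ, r (expOf w) n ∧ x = ordMon f n}

/-! Bubble sort inside `U(L)`: a descent `b a` (with `a < b`) of a word is swapped at the cost
of the term `ι⁅f_b, f_a⁆`. By the left bracket condition that term is zero or a multiple of the
word with `b a` replaced by one letter `k > a`; the exponent of that shorter word has the same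
`Ψ`-weight and is lexicographically smaller, since it agrees below `a` and has one `a` fewer.
Induction on the length and the number of inversions of the word therefore rewrites it as its
sorted word, which is the ordered monomial of its exponent, plus ordered monomials of smaller
exponents. -/

namespace List

variable {α : Type*}

def inversions [LinearOrder α] : List α → ℕ
  | [] => 0
  | a :: l => l.countP (· < a) + inversions l

theorem inversions_swap [LinearOrder α] (u v : List α) {a b : α} (hab : a < b) :
    inversions (u ++ b :: a :: v) = inversions (u ++ a :: b :: v) + 1 := by
  induction u with
  | nil =>
    simp only [nil_append, inversions, countP_cons_of_pos, countP_cons_of_neg, hab,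
      not_lt_of_gt hab, decide_true, decide_false, Bool.false_eq_true, not_false_eq_true]
    omega
  | cons c u ih =>
    have hperm : (u ++ b :: a :: v).Perm (u ++ a :: b :: v) :=
      (Perm.swap a b v).append_left u
    simp only [cons_append, inversions, hperm.countP_eq, ih]
    omega

theorem pairwise_le_or_exists_descent [LinearOrder α] (w : List α) :
    w.Pairwise (· ≤ ·) ∨ ∃ u a b v, w = u ++ b :: a :: v ∧ a < b := by
  induction w with
  | nil => exact Or.inl Pairwise.nil
  | cons x l ih =>
    rcases ih with hl | ⟨u, a, b, v, rfl, hab⟩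
    · cases l with
      | nil => exact Or.inl (pairwise_singleton _ x)
      | cons y l =>
        by_cases hxy : x ≤ y
        · refine Or.inl (pairwise_cons.2 ⟨fun z hz => ?_, hl⟩)
          rcases mem_cons.1 hz with rfl | hz
          · exact hxy
          · exact hxy.trans ((pairwise_cons.1 hl).1 z hz)
        · exact Or.inr ⟨[], y, x, l, rfl, lt_of_not_ge hxy⟩
    · exact Or.inr ⟨x :: u, a, b, v, rfl, hab⟩

end List

section Exponents

variable {N : ℕ}

def wordExp (w : List (Fin N)) : Fin N → ℕ := fun k => w.count k

def sortedWord (m : Fin N → ℕ) : List (Fin N) :=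
  (List.finRange N).flatMap fun i => List.replicate (m i) i

theorem wordExp_sortedWord (m : Fin N → ℕ) : wordExp (sortedWord m) = m := by
  funext k
  simp [wordExp, sortedWord, List.count_flatMap, ← Fin.sum_univ_def, Function.comp_def,
    List.count_replicate]

theorem pairwise_sortedWord (m : Fin N → ℕ) : (sortedWord m).Pairwise (· ≤ ·) := by
  refine List.pairwise_flatMap.2 ⟨fun i _ => List.pairwise_replicate.2 (Or.inr le_rfl), ?_⟩
  refine (List.pairwise_lt_finRange N).imp fun hij x hx y hy => ?_
  rw [List.eq_of_mem_replicate hx, List.eq_of_mem_replicate hy]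
  exact hij.le

theorem eq_sortedWord_of_pairwise {w : List (Fin N)} (hw : w.Pairwise (· ≤ ·)) :
    w = sortedWord (wordExp w) := by
  refine List.Perm.eq_of_pairwise' hw (pairwise_sortedWord _) (List.perm_iff_count.2 fun k => ?_)
  exact (congrFun (wordExp_sortedWord (wordExp w)) k).symm

theorem wordExp_append_cons (u v : List (Fin N)) (c : Fin N) :
    wordExp (u ++ c :: v) = wordExp (u ++ v) + Pi.single c 1 := by
  funext k
  simp only [wordExp, List.count_append, List.count_cons, Pi.add_apply, Pi.single_apply,
    beq_iff_eq]
  split_ifs <;> omega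

theorem expOf_eq_wordExp {t : ℕ} (w : Fin t → Fin N) : expOf w = wordExp (List.ofFn w) := by
  funext k
  rw [wordExp, ← Multiset.coe_count, ← Fin.univ_val_map, Multiset.count_map]
  simp [expOf, Finset.card, eq_comm]

end Exponents

section Sorting

open UniversalEnvelopingAlgebra

variable {N : ℕ} (f : Fin N → L)

def listProd (w : List (Fin N)) : UniversalEnvelopingAlgebra ℂ L :=
  (w.map fun i => ι ℂ (f i)).prod

@[simp]
theorem listProd_cons (i : Fin N) (w : List (Fin N)) :
    listProd f (i :: w) = ι ℂ (f i) * listProd f w := by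
  simp [listProd]

@[simp]
theorem listProd_append (u v : List (Fin N)) :
    listProd f (u ++ v) = listProd f u * listProd f v := by
  simp [listProd]

theorem wordProd_eq_listProd {t : ℕ} (w : Fin t → Fin N) :
    wordProd f w = listProd f (List.ofFn w) := by
  rw [wordProd, listProd, List.map_ofFn]
  rfl

theorem ordMon_eq_listProd_sortedWord (m : Fin N → ℕ) :
    ordMon f m = listProd f (sortedWord m) := by
  rw [ordMon, listProd, sortedWord, List.map_flatMap, List.ofFn_eq_map, List.flatMap,
    List.prod_flatten, List.map_map]
  congr 1
  refine List.map_congr_left fun i _ => ?_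
  simp [List.prod_replicate]

attribute [local instance] LieRing.ofAssociativeRing in
theorem ι_mul_ι_eq_swap_add_lie {R A : Type*} [CommRing R] [LieRing A] [LieAlgebra R A]
    (x y : A) :
    ι R x * ι R y = ι R y * ι R x + ι R ⁅x, y⁆ := by
  rw [LieHom.map_lie, Ring.lie_def]
  abel

theorem listProd_swap (u v : List (Fin N)) (a b : Fin N) :
    listProd f (u ++ b :: a :: v) =
      listProd f (u ++ a :: b :: v) + listProd f u * ι ℂ ⁅f b, f a⁆ * listProd f v := by
  simp only [listProd_append, listProd_cons, ← mul_assoc (ι ℂ (f b)),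
    ι_mul_ι_eq_swap_add_lie (f b)]
  noncomm_ring

def lowerSpan (r : (Fin N → ℕ) → (Fin N → ℕ) → Prop) (m : Fin N → ℕ) :
    Submodule ℂ (UniversalEnvelopingAlgebra ℂ L) :=
  Submodule.span ℂ {x | ∃ n, r m n ∧ x = ordMon f n}

variable {f} {r : (Fin N → ℕ) → (Fin N → ℕ) → Prop}

theorem ordMon_mem_lowerSpan {m n : Fin N → ℕ} (h : r m n) : ordMon f n ∈ lowerSpan f r m :=
  Submodule.subset_span ⟨n, h, rfl⟩

theorem lowerSpan_mono [IsTrans _ r] {m n : Fin N → ℕ} (h : r m n) :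
    lowerSpan f r n ≤ lowerSpan f r m :=
  Submodule.span_mono fun _ ⟨p, hp, hx⟩ => ⟨p, _root_.trans h hp, hx⟩

theorem listProd_sub_ordMon_mem_lowerSpan [IsTrans _ r]
    (hbr : ∀ a b : Fin N, a < b → ⁅f b, f a⁆ = 0 ∨ ∃ k, ∃ c : ℂ, ⁅f b, f a⁆ = c • f k ∧
      ∀ m : Fin N → ℕ, r (m + Pi.single a 1 + Pi.single b 1) (m + Pi.single k 1))
    (w : List (Fin N)) :
    listProd f w - ordMon f (wordExp w) ∈ lowerSpan f r (wordExp w) := by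
  rcases List.pairwise_le_or_exists_descent w with hw | ⟨u, a, b, v, rfl, hab⟩
  · rw [ordMon_eq_listProd_sortedWord, ← eq_sortedWord_of_pairwise hw, sub_self]
    exact zero_mem _
  have hexp : wordExp (u ++ b :: a :: v) = wordExp (u ++ a :: b :: v) := by
    simp only [wordExp_append_cons, add_right_comm]
  have hswapped := listProd_sub_ordMon_mem_lowerSpan hbr (u ++ a :: b :: v)
  rw [← hexp] at hswapped
  rcases hbr a b hab with hzero | ⟨k, c, hk, hlt⟩
  · rwa [listProd_swap, hzero, map_zero, mul_zero, zero_mul, add_zero]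
  have hlower : r (wordExp (u ++ b :: a :: v)) (wordExp (u ++ k :: v)) := by
    simpa only [wordExp_append_cons] using hlt (wordExp (u ++ v))
  have hk_mem : listProd f (u ++ k :: v) ∈ lowerSpan f r (wordExp (u ++ b :: a :: v)) := by
    have hrest := lowerSpan_mono hlower (listProd_sub_ordMon_mem_lowerSpan hbr (u ++ k :: v))
    simpa only [sub_add_cancel] using add_mem hrest (ordMon_mem_lowerSpan hlower)
  have hsplit : listProd f (u ++ b :: a :: v) =
      listProd f (u ++ a :: b :: v) + c • listProd f (u ++ k :: v) := by
    rw [listProd_swap, hk, map_smul, listProd_append f u (k :: v), listProd_cons, mul_smul_comm,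
      smul_mul_assoc, mul_assoc]
  rw [hsplit, add_sub_right_comm]
  exact add_mem hswapped (Submodule.smul_mem _ c hk_mem)
termination_by (w.length, w.inversions)
decreasing_by
  all_goals
    subst_vars
    simp only [List.length_append, List.length_cons, Prod.lex_iff, List.inversions_swap u v hab,
      true_and]
    omega

end Sorting

section WeightedLex

variable {N : ℕ}

theorem lexGT_trans {m n p : Fin N → ℕ} (hmn : lexGT m n) (hnp : lexGT n p) : lexGT m p := by
  obtain ⟨i, hi, hbelow_i⟩ := hmn
  obtain ⟨j, hj, hbelow_j⟩ := hnp
  rcases lt_trichotomy i j with hij | rfl | hij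
  · exact ⟨i, hbelow_j i hij ▸ hi, fun l hl => (hbelow_i l hl).trans (hbelow_j l (hl.trans hij))⟩
  · exact ⟨i, hj.trans hi, fun l hl => (hbelow_i l hl).trans (hbelow_j l hl)⟩
  · exact ⟨j, (hbelow_i j hij).symm ▸ hj, fun l hl =>
      (hbelow_i l (hl.trans hij)).trans (hbelow_j l hl)⟩

instance (Ψ : (Fin N → ℤ) →ₗ[ℤ] ℤ) : IsTrans (Fin N → ℕ) (wlexGT Ψ) where
  trans _ _ _ hmn hnp := by
    rcases hmn with hmn | ⟨hmn, hlex_mn⟩ <;> rcases hnp with hnp | ⟨hnp, hlex_np⟩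
    · exact Or.inl (hnp.trans hmn)
    · exact Or.inl (hnp ▸ hmn)
    · exact Or.inl (hmn ▸ hnp)
    · exact Or.inr ⟨hmn.trans hnp, lexGT_trans hlex_mn hlex_np⟩

theorem lexGT_add_single_add_single (m : Fin N → ℕ) {a b k : Fin N} (hab : a < b) (hak : a < k) :
    lexGT (m + Pi.single a 1 + Pi.single b 1) (m + Pi.single k 1) :=
  ⟨a, by simp [hab.ne', hak.ne'], fun j hj => by
    simp [hj.ne, (hj.trans hab).ne, (hj.trans hak).ne]⟩

theorem natToInt_add (m n : Fin N → ℕ) : natToInt (m + n) = natToInt m + natToInt n := by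
  funext i
  simp [natToInt]

theorem natToInt_single (i : Fin N) : natToInt (Pi.single i 1) = Pi.single i 1 := by
  funext j
  simp [natToInt, Pi.single_apply]

theorem wlexGT_add_single_add_single (Ψ : (Fin N → ℤ) →ₗ[ℤ] ℤ) (m : Fin N → ℕ) {a b k : Fin N}
    (hab : a < b) (hak : a < k)
    (hΨ : Ψ (Pi.single a 1) + Ψ (Pi.single b 1) = Ψ (Pi.single k 1)) :
    wlexGT Ψ (m + Pi.single a 1 + Pi.single b 1) (m + Pi.single k 1) :=
  Or.inr ⟨by simp only [natToInt_add, natToInt_single, map_add, add_assoc, hΨ],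
    lexGT_add_single_add_single m hab hak⟩

end WeightedLex

theorem left_bracket_condition_quasiCommutative_general {N : ℕ} (f : Fin N → L)
    (Ψ : (Fin N → ℤ) →ₗ[ℤ] ℤ)
    (hbr : ∀ i j : Fin N, i < j →
      ⁅f i, f j⁆ = 0 ∨ ∃ k : Fin N, i < k ∧ ∃ a : ℂ, a ≠ 0 ∧ ⁅f i, f j⁆ = a • f k)
    (hΨbr : ∀ i j k : Fin N, ∀ a : ℂ, i < j → i < k → a ≠ 0 → ⁅f i, f j⁆ = a • f k →
      Ψ (Pi.single i 1) + Ψ (Pi.single j 1) = Ψ (Pi.single k 1)) :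
    QuasiCommutative f (wlexGT Ψ) := by
  have hswap : ∀ a b : Fin N, a < b → ⁅f b, f a⁆ = 0 ∨ ∃ k, ∃ c : ℂ, ⁅f b, f a⁆ = c • f k ∧
      ∀ m : Fin N → ℕ, wlexGT Ψ (m + Pi.single a 1 + Pi.single b 1) (m + Pi.single k 1) := by
    intro a b hab
    rcases hbr a b hab with hzero | ⟨k, hak, c, hc, hk⟩
    · exact Or.inl (by rw [← lie_skew, hzero, neg_zero])
    · exact Or.inr ⟨k, -c, by rw [← lie_skew, hk, neg_smul],
        fun m => wlexGT_add_single_add_single Ψ m hab hak (hΨbr a b k c hab hak hc hk)⟩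
  intro t w
  rw [wordProd_eq_listProd, expOf_eq_wordExp]
  exact listProd_sub_ordMon_mem_lowerSpan hswap (List.ofFn w)

/-- If `(f₁, …, f_N)` satisfies the left bracket condition (for `i < j`, either
`⁅fᵢ, fⱼ⁆ = 0` or `⁅fᵢ, fⱼ⁆ = a • f_k` with `a ≠ 0` and `k > i`), and the integral weight
function `Ψ` satisfies `Ψ(eᵢ) + Ψ(eⱼ) = Ψ(e_k)` for every such bracket relation, then
`(f₁, …, f_N)` is quasi-commutative with respect to the `Ψ`-weighted lexicographic
order. -/
theorem left_bracket_condition_quasiCommutative {N : ℕ} (f : Fin N → L)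
    (Ψ : (Fin N → ℤ) →ₗ[ℤ] ℤ)
    (hΨnat : ∀ m : Fin N → ℕ, 0 ≤ Ψ (natToInt m))
    (hbr : ∀ i j : Fin N, i < j →
      ⁅f i, f j⁆ = 0 ∨ ∃ k : Fin N, i < k ∧ ∃ a : ℂ, a ≠ 0 ∧ ⁅f i, f j⁆ = a • f k)
    (hΨbr : ∀ i j k : Fin N, ∀ a : ℂ, i < j → i < k → a ≠ 0 → ⁅f i, f j⁆ = a • f k →
      Ψ (Pi.single i 1) + Ψ (Pi.single j 1) = Ψ (Pi.single k 1)) :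
    QuasiCommutative f (wlexGT Ψ) :=
  left_bracket_condition_quasiCommutative_general f Ψ hbr hΨbr
end
end

section
/- Let L be a Lie algebra over ℂ, f_1, …, f_N ∈ L, and > a linear order on ℕ^N such that (f_1, …, f_N) together with > is quasi-commutative. Then for all a, b ∈ ℕ^N the product of divided-power ordered monomials satisfies: f^{(a)} · f^{(b)} − (∏_{i=1}^N C(a_i + b_i, a_i)) · f^{(a+b)} ∈ span_ℂ{f^{(n)} : n ∈ ℕ^N, n < a + b}, where C(·,·) denotes the binomial coefficient. -/
open Finset

noncomputable section

variable {L : Type*} [LieRing L] [LieAlgebra ℂ L]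

/-- The ordered monomial in divided powers `f^{(m)} = (1/(m₁! ⋯ m_N!)) f^m` in `U(L)`. -/
def divMon {N : ℕ} (f : Fin N → L) (m : Fin N → ℕ) : UniversalEnvelopingAlgebra ℂ L :=
  ((∏ i, ((m i).factorial : ℂ)))⁻¹ • ordMon f m

/-!
Concatenating the words `f₁^{a₁} ⋯ f_N^{a_N}` and `f₁^{b₁} ⋯ f_N^{b_N}` gives a word of
exponent `a + b` whose product is `f^a f^b`, so quasi-commutativity gives
`f^a f^b ≡ f^{a+b}` modulo ordered monomials below `a + b`. Dividing by `∏ aᵢ! bᵢ!` turns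
this into the statement, since `(aᵢ + bᵢ)! / (aᵢ! bᵢ!) = C(aᵢ + bᵢ, aᵢ)`.
-/

open scoped Nat

theorem expOf_apply_eq_count_ofFn {N t : ℕ} (w : Fin t → Fin N) (k : Fin N) :
    expOf w k = (List.ofFn w).count k := by
  rw [← Multiset.coe_count, ← Fin.univ_val_map, Multiset.count_map, expOf]
  simp only [eq_comm (a := k)]
  rfl

theorem wordProd_eq_prod_map_ofFn {N t : ℕ} (f : Fin N → L) (w : Fin t → Fin N) :
    wordProd f w = ((List.ofFn w).map fun i => UniversalEnvelopingAlgebra.ι ℂ (f i)).prod := by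
  rw [wordProd, List.map_ofFn]
  rfl

def monomialWord {N : ℕ} (m : Fin N → ℕ) : List (Fin N) :=
  (List.finRange N).flatMap fun i => List.replicate (m i) i

theorem count_monomialWord {N : ℕ} (m : Fin N → ℕ) (k : Fin N) :
    (monomialWord m).count k = m k := by
  simp [monomialWord, List.count_flatMap, List.count_replicate, ← List.ofFn_eq_map,
    List.sum_ofFn]

theorem prod_map_monomialWord {N : ℕ} (f : Fin N → L) (m : Fin N → ℕ) :
    ((monomialWord m).map fun i => UniversalEnvelopingAlgebra.ι ℂ (f i)).prod = ordMon f m := by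
  simp [monomialWord, ordMon, List.ofFn_eq_map, List.flatMap, List.prod_flatten,
    Function.comp_def, List.prod_replicate]

theorem exists_word_expOf_eq_add_and_wordProd_eq_mul {N : ℕ} (f : Fin N → L)
    (a b : Fin N → ℕ) :
    ∃ (t : ℕ) (w : Fin t → Fin N),
      expOf w = a + b ∧ wordProd f w = ordMon f a * ordMon f b := by
  set word := monomialWord a ++ monomialWord b
  refine ⟨word.length, word.get, ?_, ?_⟩
  · ext k
    rw [expOf_apply_eq_count_ofFn, List.ofFn_get, List.count_append, count_monomialWord,
      count_monomialWord, Pi.add_apply]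
  · rw [wordProd_eq_prod_map_ofFn, List.ofFn_get, List.map_append, List.prod_append,
      prod_map_monomialWord, prod_map_monomialWord]

theorem QuasiCommutative.ordMon_mul_ordMon_sub_mem {N : ℕ} {f : Fin N → L}
    {r : (Fin N → ℕ) → (Fin N → ℕ) → Prop} (hqc : QuasiCommutative f r)
    (a b : Fin N → ℕ) :
    ordMon f a * ordMon f b - ordMon f (a + b) ∈
      Submodule.span ℂ {x | ∃ n, r (a + b) n ∧ x = ordMon f n} := by
  obtain ⟨t, w, hexp, hprod⟩ := exists_word_expOf_eq_add_and_wordProd_eq_mul f a b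
  simpa only [hexp, hprod] using hqc t w

theorem prod_factorial_ne_zero {N : ℕ} (m : Fin N → ℕ) : ∏ i, ((m i)! : ℂ) ≠ 0 :=
  Finset.prod_ne_zero_iff.2 fun i _ => mod_cast (m i).factorial_ne_zero

theorem ordMon_eq_smul_divMon {N : ℕ} (f : Fin N → L) (m : Fin N → ℕ) :
    ordMon f m = (∏ i, ((m i)! : ℂ)) • divMon f m := by
  rw [divMon, smul_smul, mul_inv_cancel₀ (prod_factorial_ne_zero m), one_smul]

theorem span_ordMon_le_span_divMon {N : ℕ} (f : Fin N → L) (p : (Fin N → ℕ) → Prop) :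
    Submodule.span ℂ {x | ∃ n, p n ∧ x = ordMon f n} ≤
      Submodule.span ℂ {x | ∃ n, p n ∧ x = divMon f n} := by
  rw [Submodule.span_le]
  rintro x ⟨n, hn, rfl⟩
  rw [ordMon_eq_smul_divMon]
  exact Submodule.smul_mem _ _ (Submodule.subset_span ⟨n, hn, rfl⟩)

theorem divMon_mul_divMon_eq_smul {N : ℕ} (f : Fin N → L) (a b : Fin N → ℕ) :
    divMon f a * divMon f b =
      ((∏ i, ((a i)! : ℂ)) * ∏ i, ((b i)! : ℂ))⁻¹ • (ordMon f a * ordMon f b) := by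
  rw [divMon, divMon, smul_mul_smul_comm, mul_inv]

theorem prod_choose_smul_divMon_add {N : ℕ} (f : Fin N → L) (a b : Fin N → ℕ) :
    (∏ i, (((a i + b i).choose (a i) : ℕ) : ℂ)) • divMon f (a + b) =
      ((∏ i, ((a i)! : ℂ)) * ∏ i, ((b i)! : ℂ))⁻¹ • ordMon f (a + b) := by
  have hfactorial : ∏ i, (((a + b) i)! : ℂ) =
      (∏ i, (((a i + b i).choose (a i) : ℕ) : ℂ)) *
        ((∏ i, ((a i)! : ℂ)) * ∏ i, ((b i)! : ℂ)) := by
    rw [← Finset.prod_mul_distrib, ← Finset.prod_mul_distrib]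
    refine Finset.prod_congr rfl fun i _ => ?_
    rw [Pi.add_apply, ← mul_assoc, mul_right_comm, add_comm (a i)]
    exact_mod_cast (Nat.add_choose_mul_factorial_mul_factorial (b i) (a i)).symm
  have hchoose : ∏ i, (((a i + b i).choose (a i) : ℕ) : ℂ) ≠ 0 :=
    Finset.prod_ne_zero_iff.2 fun i _ => mod_cast (Nat.choose_pos (Nat.le_add_right _ _)).ne'
  rw [divMon, smul_smul, hfactorial, mul_inv, mul_inv_cancel_left₀ hchoose]

theorem divMon_mul_divMon_general {N : ℕ} {L : Type*} [LieRing L] [LieAlgebra ℂ L]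
    (f : Fin N → L) (r : (Fin N → ℕ) → (Fin N → ℕ) → Prop)
    (hqc : QuasiCommutative f r)
    (a b : Fin N → ℕ) :
    divMon f a * divMon f b -
        (∏ i, (((a i + b i).choose (a i) : ℕ) : ℂ)) • divMon f (a + b) ∈
      Submodule.span ℂ {x : UniversalEnvelopingAlgebra ℂ L |
        ∃ n : Fin N → ℕ, r (a + b) n ∧ x = divMon f n} := by
  rw [divMon_mul_divMon_eq_smul, prod_choose_smul_divMon_add, ← smul_sub]
  exact Submodule.smul_mem _ _
    (span_ordMon_le_span_divMon f _ (hqc.ordMon_mul_ordMon_sub_mem a b))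

/-- If `(f₁, …, f_N)` is quasi-commutative with respect to a linear order `r` on `ℕ^N`
(`r m n` meaning `m > n`), then for all `a, b ∈ ℕ^N` the product of divided-power ordered
monomials satisfies
`f^{(a)} · f^{(b)} − (∏ᵢ C(aᵢ + bᵢ, aᵢ)) · f^{(a+b)} ∈ span ℂ {f^{(n)} : n < a + b}`. -/
theorem divMon_mul_divMon {N : ℕ} {L : Type*} [LieRing L] [LieAlgebra ℂ L]
    (f : Fin N → L) (r : (Fin N → ℕ) → (Fin N → ℕ) → Prop)
    (hirr : ∀ m, ¬ r m m)
    (htrans : ∀ a b c, r a b → r b c → r a c)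
    (htot : ∀ a b, a = b ∨ r a b ∨ r b a)
    (hqc : QuasiCommutative f r)
    (a b : Fin N → ℕ) :
    divMon f a * divMon f b -
        (∏ i, (((a i + b i).choose (a i) : ℕ) : ℂ)) • divMon f (a + b) ∈
      Submodule.span ℂ {x : UniversalEnvelopingAlgebra ℂ L |
        ∃ n : Fin N → ℕ, r (a + b) n ∧ x = divMon f n} :=
  divMon_mul_divMon_general f r hqc a b

end
end
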